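/- Let d, M be positive integers, N = d+1, and for each 1 ≤ n ≤ M let A_n be a tensor of order n. Suppose each A_n is a fixed point of the group action Φ_n, i.e. Φ_n(r)(A_n) = A_n for every r ∈ O_d(ℝ) and every 1 ≤ n ≤ M. Then the PDE system ∂_t W + Σ_{n=1}^M A_n : ∇^n W = 0 is isotropic: for every C^{M+1} solution W : ℝ × ℝ^d → ℝ^N of the system and every r ∈ O_d(ℝ), the rotated function W̃(t, x̃) = (Diag(1,r))⁻¹ · W(t, r x̃) is again a solution of the SAME system, i.e. ∂_t W̃^i + Σ_{n=1}^M (A_n : ∇^n W̃)^i = 0 for all (t, x̃) and all 1 ≤ i ≤ N. -/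

import Mathlib

/-! With `R = Diag(1, r)` and `W̃(t, x̃) = R⁻¹ W(t, r x̃)`, every term of the system for `W̃` at
`(t, x̃)` is `R⁻¹` applied to the corresponding term for `W` at `(t, r x̃)`, except that `A_n`
is replaced by `Φ_n(r)(A_n)`: `R⁻¹` passes through all derivatives by linearity, and the chain
rule for `x̃ ↦ r x̃` turns `∂_α` into `Σ_β r^β_α ∂_β`, whose coefficients, together with the
conjugation by `R`, are exactly those of `Φ_n(r)`. Invariance of the `A_n` then makes the
rotated system `R⁻¹` times the original one. -/

open Matrix

noncomputable section

def diagOne {d : ℕ} (r : Matrix (Fin d) (Fin d) ℝ) :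
    Matrix (Fin (d + 1)) (Fin (d + 1)) ℝ :=
  Matrix.of fun i j =>
    if hi : i = 0 then (if j = 0 then (1 : ℝ) else 0)
    else if hj : j = 0 then 0 else r (i.pred hi) (j.pred hj)

def Phi {d n : ℕ} (r : Matrix (Fin d) (Fin d) ℝ)
    (A : Fin (d + 1) → Fin (d + 1) → (Fin n → Fin d) → ℝ) :
    Fin (d + 1) → Fin (d + 1) → (Fin n → Fin d) → ℝ :=
  fun i j α =>
    ∑ l : Fin (d + 1), ∑ k : Fin (d + 1), ∑ β : Fin n → Fin d,
      diagOne r i l * A l k β * (∏ m : Fin n, r (α m) (β m)) * (diagOne r)⁻¹ k j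

def iterPartial {d : ℕ} (n : ℕ) (f : (Fin d → ℝ) → ℝ) (x : Fin d → ℝ)
    (α : Fin n → Fin d) : ℝ :=
  iteratedFDeriv ℝ n f x (fun m => Pi.single (α m) (1 : ℝ))

def contractT {d : ℕ} (n : ℕ)
    (A : Fin (d + 1) → Fin (d + 1) → (Fin n → Fin d) → ℝ)
    (W : ℝ × (Fin d → ℝ) → (Fin (d + 1) → ℝ)) (t : ℝ) (x : Fin d → ℝ)
    (i : Fin (d + 1)) : ℝ :=
  ∑ j : Fin (d + 1), ∑ α : Fin n → Fin d,
    A i j α * iterPartial n (fun y => W (t, y) j) x α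

lemma diagOne_mul {d : ℕ} (a b : Matrix (Fin d) (Fin d) ℝ) :
    diagOne (a * b) = diagOne a * diagOne b := by
  ext i j
  cases i using Fin.cases <;> cases j using Fin.cases <;>
    simp [diagOne, Matrix.mul_apply, Fin.sum_univ_succ]

lemma diagOne_one {d : ℕ} : diagOne (1 : Matrix (Fin d) (Fin d) ℝ) = 1 := by
  ext i j
  cases i using Fin.cases <;> cases j using Fin.cases <;>
    simp [diagOne, Matrix.one_apply, Fin.succ_ne_zero, eq_comm]

lemma inv_diagOne {d : ℕ} {r : Matrix (Fin d) (Fin d) ℝ} (hr : IsUnit r.det) :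
    (diagOne r)⁻¹ = diagOne r⁻¹ :=
  Matrix.inv_eq_left_inv (by rw [← diagOne_mul, Matrix.nonsing_inv_mul _ hr, diagOne_one])

lemma sum_inv_mul_Phi {d n : ℕ} {r : Matrix (Fin d) (Fin d) ℝ} (hr : IsUnit r.det)
    (A : Fin (d + 1) → Fin (d + 1) → (Fin n → Fin d) → ℝ) (i k : Fin (d + 1))
    (β : Fin n → Fin d) :
    ∑ l, (diagOne r)⁻¹ i l * Phi r A l k β
      = ∑ q, ∑ γ : Fin n → Fin d, A i q γ * (∏ m, r (β m) (γ m)) * (diagOne r)⁻¹ q k := by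
  have hR : (diagOne r)⁻¹ * diagOne r = 1 := by
    rw [inv_diagOne hr, ← diagOne_mul, Matrix.nonsing_inv_mul _ hr, diagOne_one]
  calc ∑ l, (diagOne r)⁻¹ i l * Phi r A l k β
      = ∑ p, ((diagOne r)⁻¹ * diagOne r) i p *
          ∑ q, ∑ γ : Fin n → Fin d, A p q γ * (∏ m, r (β m) (γ m)) * (diagOne r)⁻¹ q k := by
        simp only [Phi, Matrix.mul_apply, Finset.mul_sum, Finset.sum_mul]
        rw [Finset.sum_comm]
        refine Finset.sum_congr rfl fun p _ => ?_
        rw [Finset.sum_comm]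
        refine Finset.sum_congr rfl fun q _ => ?_
        rw [Finset.sum_comm]
        exact Finset.sum_congr rfl fun γ _ => Finset.sum_congr rfl fun l _ => by ring
    _ = _ := by simp [hR, Matrix.one_apply]

lemma iterPartial_sum_mul {d n : ℕ} {ι : Type*} [Fintype ι] (c : ι → ℝ)
    (f : ι → (Fin d → ℝ) → ℝ) (hf : ∀ k, ContDiff ℝ n (f k)) (x : Fin d → ℝ)
    (α : Fin n → Fin d) :
    iterPartial n (fun y => ∑ k, c k * f k y) x α = ∑ k, c k * iterPartial n (f k) x α := by
  have hsum : (fun y => ∑ k, c k * f k y) = fun y => ∑ k, (fun z => c k • f k z) y := rfl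
  rw [iterPartial, hsum,
    iteratedFDeriv_fun_sum_apply fun k _ => ((hf k).const_smul (c k)).contDiffAt]
  simp only [_root_.sum_apply]
  refine Finset.sum_congr rfl fun k _ => ?_
  rw [iteratedFDeriv_const_smul_apply' (hf k).contDiffAt]
  rfl

lemma iterPartial_comp_mulVec {d n : ℕ} (r : Matrix (Fin d) (Fin d) ℝ)
    {f : (Fin d → ℝ) → ℝ} (hf : ContDiff ℝ n f) (x : Fin d → ℝ) (α : Fin n → Fin d) :
    iterPartial n (fun y => f (r *ᵥ y)) x α
      = ∑ β : Fin n → Fin d, (∏ m, r (β m) (α m)) * iterPartial n f (r *ᵥ x) β := by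
  let L : (Fin d → ℝ) →L[ℝ] (Fin d → ℝ) := LinearMap.toContinuousLinearMap r.mulVecLin
  have hL : ∀ a : Fin d, L (Pi.single a 1) = ∑ b, r b a • Pi.single b (1 : ℝ) := by
    intro a; funext c
    simp [L, Matrix.mulVec, dotProduct, Pi.single_apply]
  rw [iterPartial, show (fun y => f (r *ᵥ y)) = f ∘ L from rfl,
    L.iteratedFDeriv_comp_right hf x le_rfl,
    ContinuousMultilinearMap.compContinuousLinearMap_apply]
  simp only [hL, ContinuousMultilinearMap.map_sum, ContinuousMultilinearMap.map_smul_univ]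
  rfl

lemma iterPartial_mulVec_comp_mulVec {d n : ℕ} {ι κ : Type*} [Fintype κ]
    (S : Matrix ι κ ℝ) (r : Matrix (Fin d) (Fin d) ℝ) {F : (Fin d → ℝ) → κ → ℝ}
    (hF : ∀ k, ContDiff ℝ n fun y => F y k) (x : Fin d → ℝ) (j : ι) (α : Fin n → Fin d) :
    iterPartial n (fun y => (S *ᵥ F (r *ᵥ y)) j) x α
      = ∑ k, S j k * ∑ β : Fin n → Fin d,
          (∏ m, r (β m) (α m)) * iterPartial n (fun y => F y k) (r *ᵥ x) β := by
  rw [show (fun y => (S *ᵥ F (r *ᵥ y)) j) = fun y => ∑ k, S j k * F (r *ᵥ y) k from rfl,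
    iterPartial_sum_mul (fun k => S j k) (fun k y => F (r *ᵥ y) k)
      fun k => (hF k).comp r.mulVecLin.toContinuousLinearMap.contDiff]
  simp only [iterPartial_comp_mulVec r (hF _)]

lemma contractT_rotate {d n : ℕ} (A : Fin (d + 1) → Fin (d + 1) → (Fin n → Fin d) → ℝ)
    (W : ℝ × (Fin d → ℝ) → (Fin (d + 1) → ℝ)) (t : ℝ)
    (hW : ∀ k, ContDiff ℝ n fun y => W (t, y) k) {r : Matrix (Fin d) (Fin d) ℝ}
    (hr : IsUnit r.det) (x : Fin d → ℝ) :
    contractT n A (fun p => (diagOne r)⁻¹ *ᵥ W (p.1, r *ᵥ p.2)) t x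
      = (diagOne r)⁻¹ *ᵥ contractT n (Phi r A) W t (r *ᵥ x) := by
  ext i
  set D : Fin (d + 1) → (Fin n → Fin d) → ℝ :=
    fun k β => iterPartial n (fun y => W (t, y) k) (r *ᵥ x) β
  calc contractT n A (fun p => (diagOne r)⁻¹ *ᵥ W (p.1, r *ᵥ p.2)) t x i
      = ∑ q, ∑ γ : Fin n → Fin d, ∑ k, ∑ β : Fin n → Fin d,
          A i q γ * (∏ m, r (β m) (γ m)) * (diagOne r)⁻¹ q k * D k β := by
        simp only [contractT, iterPartial_mulVec_comp_mulVec _ r hW, Finset.mul_sum]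
        exact Finset.sum_congr rfl fun q _ => Finset.sum_congr rfl fun γ _ =>
          Finset.sum_congr rfl fun k _ => Finset.sum_congr rfl fun β _ => by ring
    _ = ∑ k, ∑ β : Fin n → Fin d, (∑ l, (diagOne r)⁻¹ i l * Phi r A l k β) * D k β := by
        simp only [sum_inv_mul_Phi hr, Finset.sum_mul]
        rw [Finset.sum_comm_cycle]
        exact Finset.sum_congr rfl fun k _ => Finset.sum_comm_cycle
    _ = ((diagOne r)⁻¹ *ᵥ contractT n (Phi r A) W t (r *ᵥ x)) i := by
        simp only [Matrix.mulVec, dotProduct, contractT, Finset.mul_sum, Finset.sum_mul,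
          mul_assoc]
        exact Finset.sum_comm_cycle

lemma deriv_mulVec_apply {ι κ : Type*} [Fintype κ] (S : Matrix ι κ ℝ) {f : ℝ → κ → ℝ}
    {t : ℝ} (hf : ∀ k, DifferentiableAt ℝ (fun s => f s k) t) (i : ι) :
    deriv (fun s => (S *ᵥ f s) i) t = (S *ᵥ fun k => deriv (fun s => f s k) t) i := by
  change deriv (fun s => ∑ k, S i k * f s k) t = ∑ k, S i k * deriv (fun s => f s k) t
  rw [deriv_fun_sum fun k _ => (hf k).const_mul _]
  exact Finset.sum_congr rfl fun k _ => deriv_const_mul _ (hf k)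

theorem pde_system_isotropic_general (d M : ℕ)
    (A : (n : ℕ) → Fin (d + 1) → Fin (d + 1) → (Fin n → Fin d) → ℝ)
    (hA : ∀ n ∈ Finset.Icc 1 M, ∀ r : Matrix (Fin d) (Fin d) ℝ,
      rᵀ * r = 1 → Phi r (A n) = A n)
    (W : ℝ × (Fin d → ℝ) → (Fin (d + 1) → ℝ))
    (hW : ContDiff ℝ (M + 1) W)
    (hpde : ∀ (t : ℝ) (x : Fin d → ℝ) (i : Fin (d + 1)),
      deriv (fun s => W (s, x) i) t
        + ∑ n ∈ Finset.Icc 1 M, contractT n (A n) W t x i = 0)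
    (r : Matrix (Fin d) (Fin d) ℝ) (hr : rᵀ * r = 1) :
    ∀ (t : ℝ) (xt : Fin d → ℝ) (i : Fin (d + 1)),
      deriv (fun s => (diagOne r)⁻¹.mulVec (W (s, r.mulVec xt)) i) t
        + ∑ n ∈ Finset.Icc 1 M,
            contractT n (A n)
              (fun p => (diagOne r)⁻¹.mulVec (W (p.1, r.mulVec p.2))) t xt i = 0 := by
  intro t xt i
  have hspace : ∀ n ∈ Finset.Icc 1 M, ∀ k, ContDiff ℝ n fun y => W (t, y) k := fun n hn k =>
    (contDiff_pi.1 (hW.comp (contDiff_const.prodMk contDiff_id)) k).of_le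
      (by exact_mod_cast (Finset.mem_Icc.1 hn).2.trans (Nat.le_succ M))
  have htime : ∀ k, DifferentiableAt ℝ (fun s => W (s, r *ᵥ xt) k) t := fun k =>
    ((contDiff_pi.1 (hW.comp (contDiff_id.prodMk contDiff_const)) k).differentiable
      (by simp)).differentiableAt
  have hspatial : ∀ n ∈ Finset.Icc 1 M,
      contractT n (A n) (fun p => (diagOne r)⁻¹ *ᵥ W (p.1, r *ᵥ p.2)) t xt i
        = ((diagOne r)⁻¹ *ᵥ contractT n (A n) W t (r *ᵥ xt)) i := fun n hn => by
    rw [contractT_rotate (A n) W t (hspace n hn) (Matrix.isUnit_det_of_left_inverse hr),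
      hA n hn r hr]
  rw [deriv_mulVec_apply _ htime, Finset.sum_congr rfl hspatial, ← Finset.sum_apply,
    ← Matrix.mulVec_sum, ← Pi.add_apply, ← Matrix.mulVec_add]
  have hrhs : (fun k => deriv (fun s => W (s, r *ᵥ xt) k) t)
      + ∑ n ∈ Finset.Icc 1 M, contractT n (A n) W t (r *ᵥ xt) = 0 := by
    ext k
    simpa only [Pi.add_apply, Finset.sum_apply, Pi.zero_apply] using hpde t (r *ᵥ xt) k
  rw [hrhs, Matrix.mulVec_zero, Pi.zero_apply]

/-- If each tensor `A_n`, `1 ≤ n ≤ M`, is a fixed point of the group action `Φ_n`,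
i.e. `Φ_n(r)(A_n) = A_n` for every `r ∈ O_d(ℝ)`, then the PDE system
`∂_t W + Σ_{n=1}^M A_n : ∇^n W = 0` is isotropic: for every `C^{M+1}` solution `W`
and every `r ∈ O_d(ℝ)`, the rotated function `W̃(t, x̃) = (Diag(1,r))⁻¹ W(t, r x̃)`
is again a solution of the same system. -/
theorem pde_system_isotropic (d M : ℕ) (hd : 0 < d) (hM : 0 < M)
    (A : (n : ℕ) → Fin (d + 1) → Fin (d + 1) → (Fin n → Fin d) → ℝ)
    (hA : ∀ n ∈ Finset.Icc 1 M, ∀ r : Matrix (Fin d) (Fin d) ℝ,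
      rᵀ * r = 1 → Phi r (A n) = A n)
    (W : ℝ × (Fin d → ℝ) → (Fin (d + 1) → ℝ))
    (hW : ContDiff ℝ (M + 1) W)
    (hpde : ∀ (t : ℝ) (x : Fin d → ℝ) (i : Fin (d + 1)),
      deriv (fun s => W (s, x) i) t
        + ∑ n ∈ Finset.Icc 1 M, contractT n (A n) W t x i = 0)
    (r : Matrix (Fin d) (Fin d) ℝ) (hr : rᵀ * r = 1) :
    ∀ (t : ℝ) (xt : Fin d → ℝ) (i : Fin (d + 1)),
      deriv (fun s => (diagOne r)⁻¹.mulVec (W (s, r.mulVec xt)) i) t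
        + ∑ n ∈ Finset.Icc 1 M,
            contractT n (A n)
              (fun p => (diagOne r)⁻¹.mulVec (W (p.1, r.mulVec p.2))) t xt i = 0 :=
  pde_system_isotropic_general d M A hA W hW hpde r hr
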